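/- Let $V_1, V_2, V_3$ be subspaces of a finite-dimensional vector space $V$. Then $V_1 \cap (V_2 + V_3) = V_1 \cap V_2 + V_1 \cap V_3$ holds if and only if the inclusion-exclusion formula $\dim(V_1 + V_2 + V_3) = \dim V_1 + \dim V_2 + \dim V_3 - \dim(V_1 \cap V_2) - \dim(V_1 \cap V_3) - \dim(V_2 \cap V_3) + \dim(V_1 \cap V_2 \cap V_3)$ holds. -/

import Mathlib

/-!
Apply the two-subspace formula `dim (A + B) + dim (A ∩ B) = dim A + dim B` to the pairs
`(V₁, V₂ + V₃)`, `(V₂, V₃)` and `(V₁ ∩ V₂, V₁ ∩ V₃)`. Together they show that the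
inclusion–exclusion formula fails by exactly `dim (V₁ ∩ (V₂ + V₃)) - dim (V₁ ∩ V₂ + V₁ ∩ V₃)`,
and this vanishes iff the inclusion `V₁ ∩ V₂ + V₁ ∩ V₃ ⊆ V₁ ∩ (V₂ + V₃)` is an equality.
-/

open Module

namespace Submodule

variable {k V : Type*} [Field k] [AddCommGroup V] [Module k V]

theorem inf_sup_eq_iff_finrank_eq (V₁ V₂ V₃ : Submodule k V) [FiniteDimensional k V₁] :
    V₁ ⊓ (V₂ ⊔ V₃) = V₁ ⊓ V₂ ⊔ V₁ ⊓ V₃ ↔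
      finrank k ↥(V₁ ⊓ (V₂ ⊔ V₃)) = finrank k ↥(V₁ ⊓ V₂ ⊔ V₁ ⊓ V₃) :=
  ⟨fun h => by rw [h], fun h => (eq_of_le_of_finrank_eq le_inf_sup h.symm).symm⟩

theorem finrank_sup_sup_add_finrank_inf_sup (V₁ V₂ V₃ : Submodule k V)
    [FiniteDimensional k V₁] [FiniteDimensional k V₂] [FiniteDimensional k V₃] :
    finrank k ↥(V₁ ⊔ V₂ ⊔ V₃) + finrank k ↥(V₁ ⊓ V₂) + finrank k ↥(V₁ ⊓ V₃)
        + finrank k ↥(V₂ ⊓ V₃) + finrank k ↥(V₁ ⊓ (V₂ ⊔ V₃))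
      = finrank k ↥V₁ + finrank k ↥V₂ + finrank k ↥V₃ + finrank k ↥(V₁ ⊓ V₂ ⊓ V₃)
        + finrank k ↥(V₁ ⊓ V₂ ⊔ V₁ ⊓ V₃) := by
  have h₁ := finrank_sup_add_finrank_inf_eq V₁ (V₂ ⊔ V₃)
  have h₂ := finrank_sup_add_finrank_inf_eq V₂ V₃
  have h₃ := finrank_sup_add_finrank_inf_eq (V₁ ⊓ V₂) (V₁ ⊓ V₃)
  rw [← sup_assoc] at h₁
  rw [inf_inf_inf_comm, inf_idem, ← inf_assoc] at h₃
  omega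

end Submodule

/-- `V₁ ⊓ (V₂ ⊔ V₃) = V₁ ⊓ V₂ ⊔ V₁ ⊓ V₃` holds iff the inclusion-exclusion formula
for dimensions holds (stated additively to avoid natural subtraction). -/
theorem stmt1 (k : Type*) [Field k] (V : Type*) [AddCommGroup V] [Module k V]
    [FiniteDimensional k V] (V₁ V₂ V₃ : Submodule k V) :
    V₁ ⊓ (V₂ ⊔ V₃) = V₁ ⊓ V₂ ⊔ V₁ ⊓ V₃ ↔
      finrank k ↥(V₁ ⊔ V₂ ⊔ V₃) + finrank k ↥(V₁ ⊓ V₂) + finrank k ↥(V₁ ⊓ V₃)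
          + finrank k ↥(V₂ ⊓ V₃)
        = finrank k ↥V₁ + finrank k ↥V₂ + finrank k ↥V₃ + finrank k ↥(V₁ ⊓ V₂ ⊓ V₃) := by
  have defect := Submodule.finrank_sup_sup_add_finrank_inf_sup V₁ V₂ V₃
  rw [Submodule.inf_sup_eq_iff_finrank_eq]
  omega
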